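/- arXiv:2006.01454 — 3 statements merged into one kernel-verified Lean document; each statement's English description precedes it below -/
import Mathlib

section
/- Let p > 1 and M > 0, and suppose that the function x ↦ f(x)/x^{p−1} is nondecreasing on [M, ∞). Then the function η(x) = f(x)·x − pF(x) is nondecreasing on [M, ∞). (This is the paper's claim that monotonicity of x ↦ f(x)/x^{p−1} beyond M is a natural way to verify the quasimonotonicity hypothesis H₁(iii).) -/
/-- If `x ↦ f(x)/x^{p−1}` is nondecreasing on `[M, ∞)` (with `p > 1`, `M > 0`),
then `η(x) = f(x)x − pF(x)` is nondecreasing on `[M, ∞)`. -/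
theorem quotient_monotone_implies_eta_monotone (f : ℝ → ℝ) (hf : Continuous f)
    (F : ℝ → ℝ) (hF : ∀ x : ℝ, F x = ∫ s in (0 : ℝ)..x, f s)
    (p M : ℝ) (hp : 1 < p) (hM : 0 < M)
    (hmono : MonotoneOn (fun x => f x / x ^ (p - 1)) (Set.Ici M)) :
    MonotoneOn (fun x => f x * x - p * F x) (Set.Ici M) := by
  intro a ha b hb hab
  simp only [Set.mem_Ici] at ha hb
  have ha0 : 0 < a := hM.trans_le ha
  have hb0 : 0 < b := hM.trans_le hb
  have hbp1 : (0:ℝ) < b ^ (p - 1) := Real.rpow_pos_of_pos hb0 _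
  have hap1 : (0:ℝ) < a ^ (p - 1) := Real.rpow_pos_of_pos ha0 _
  have hFab : F b - F a = ∫ s in a..b, f s := by
    rw [hF, hF, intervalIntegral.integral_interval_sub_left
      (hf.intervalIntegrable _ _) (hf.intervalIntegrable _ _)]
  set g : ℝ → ℝ := fun x => f x / x ^ (p - 1) with hg
  have hcont : Continuous fun s : ℝ => g b * s ^ (p - 1) := by
    apply Continuous.mul continuous_const
    apply continuous_iff_continuousAt.2
    intro x
    exact Real.continuousAt_rpow_const x (p - 1) (Or.inr (by linarith))
  have h1 : ∫ s in a..b, f s ≤ ∫ s in a..b, g b * s ^ (p - 1) := by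
    apply intervalIntegral.integral_mono_on hab (hf.intervalIntegrable _ _)
      (hcont.intervalIntegrable _ _)
    intro s hs
    have hs0 : 0 < s := ha0.trans_le hs.1
    have hsM : M ≤ s := ha.trans hs.1
    have hgs : g s ≤ g b := hmono (Set.mem_Ici.2 hsM) (Set.mem_Ici.2 hb) hs.2
    have hsp : (0:ℝ) < s ^ (p - 1) := Real.rpow_pos_of_pos hs0 _
    have : f s = g s * s ^ (p - 1) := by
      simp [hg]; field_simp
    rw [this]
    exact mul_le_mul_of_nonneg_right hgs hsp.le
  have hint : ∫ s in a..b, s ^ (p - 1) = (b ^ p - a ^ p) / p := by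
    rw [integral_rpow (Or.inl (by linarith))]
    ring_nf
  have h2 : ∫ s in a..b, g b * s ^ (p - 1) = g b * ((b ^ p - a ^ p) / p) := by
    rw [intervalIntegral.integral_const_mul, hint]
  have hbp : b ^ p = b ^ (p - 1) * b := by
    rw [show p = (p-1)+1 by ring, Real.rpow_add hb0, Real.rpow_one]; ring_nf
  have hap : a ^ p = a ^ (p - 1) * a := by
    rw [show p = (p-1)+1 by ring, Real.rpow_add ha0, Real.rpow_one]; ring_nf
  have hfb : g b * b ^ (p - 1) = f b := div_mul_cancel₀ _ hbp1.ne'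
  have hfa : g a * a ^ (p - 1) = f a := div_mul_cancel₀ _ hap1.ne'
  have hga : g a ≤ g b := hmono (Set.mem_Ici.2 ha) (Set.mem_Ici.2 hb) hab
  have hp0 : (0:ℝ) < p := by linarith
  have key : p * (F b - F a) ≤ f b * b - f a * a := by
    rw [hFab]
    have : p * ∫ s in a..b, f s ≤ p * (g b * ((b ^ p - a ^ p) / p)) := by
      apply mul_le_mul_of_nonneg_left _ hp0.le
      rw [← h2]; exact h1
    calc p * ∫ s in a..b, f s ≤ p * (g b * ((b ^ p - a ^ p) / p)) := this
      _ = g b * (b ^ p - a ^ p) := by field_simp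
      _ = f b * b - g b * a ^ p := by rw [hbp, hap]; nlinarith [hfb]
      _ ≤ f b * b - f a * a := by
          have : f a * a ≤ g b * a ^ p := by
            rw [hap, ← hfa]
            nlinarith [mul_le_mul_of_nonneg_right hga hap1.le]
          linarith
  simp only
  linarith
end

section
/- Let p > 1, γ ∈ ℝ and M₁ > 0, and suppose that f(x)·x − pF(x) ≥ γ for all x ≥ M₁. Then for all real numbers u, x with M₁ ≤ u ≤ x one has F(x)/x^p − F(u)/u^p ≥ (γ/p)·(1/u^p − 1/x^p). (Inequality (3.5)/(eq35) in the proof of Proposition 8.) -/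
/-- Inequality (eq35) in the proof of Proposition 8: if
`f(x)x − pF(x) ≥ γ` for all `x ≥ M₁ > 0` (with `p > 1`), then for all
`M₁ ≤ u ≤ x`, `F(x)/x^p − F(u)/u^p ≥ (γ/p)(1/u^p − 1/x^p)`. -/
theorem F_div_rpow_estimate (f : ℝ → ℝ) (hf : Continuous f)
    (F : ℝ → ℝ) (hF : ∀ x : ℝ, F x = ∫ s in (0 : ℝ)..x, f s)
    (p γ M₁ : ℝ) (hp : 1 < p) (hM₁ : 0 < M₁)
    (hγ : ∀ x : ℝ, M₁ ≤ x → γ ≤ f x * x - p * F x) :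
    ∀ u x : ℝ, M₁ ≤ u → u ≤ x →
      γ / p * (1 / u ^ p - 1 / x ^ p) ≤ F x / x ^ p - F u / u ^ p := by
  intro u x hu hux
  have hp0 : (0:ℝ) < p := by linarith
  have hu0 : (0:ℝ) < u := lt_of_lt_of_le hM₁ hu
  set g : ℝ → ℝ := fun t => (F t + γ / p) / t ^ p with hg
  have hFeq : F = fun y => ∫ s in (0:ℝ)..y, f s := funext hF
  have key : ∀ t : ℝ, M₁ ≤ t →
      HasDerivAt g ((f t * t ^ p - (F t + γ / p) * (p * t ^ (p - 1))) / (t ^ p) ^ 2) t := by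
    intro t ht
    have ht0 : (0:ℝ) < t := lt_of_lt_of_le hM₁ ht
    have hF' : HasDerivAt F (f t) t := by
      rw [hFeq]
      exact (hf.integral_hasStrictDerivAt 0 t).hasDerivAt
    have h1 : HasDerivAt (fun y => F y + γ / p) (f t) t := hF'.add_const _
    have h2 : HasDerivAt (fun y : ℝ => y ^ p) (p * t ^ (p - 1)) t :=
      Real.hasDerivAt_rpow_const (Or.inl ht0.ne')
    exact h1.div h2 (Real.rpow_pos_of_pos ht0 p).ne'
  have mono : MonotoneOn g (Set.Icc u x) := by
    apply monotoneOn_of_deriv_nonneg (convex_Icc u x)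
    · intro t ht
      exact (key t (le_trans hu ht.1)).continuousAt.continuousWithinAt
    · intro t ht
      rw [interior_Icc] at ht
      exact (key t (le_trans hu ht.1.le)).differentiableAt.differentiableWithinAt
    · intro t ht
      rw [interior_Icc] at ht
      have htM : M₁ ≤ t := le_trans hu ht.1.le
      have ht0 : (0:ℝ) < t := lt_of_lt_of_le hM₁ htM
      rw [(key t htM).deriv]
      apply div_nonneg _ (sq_nonneg _)
      have hnum : f t * t ^ p - (F t + γ / p) * (p * t ^ (p - 1))
          = t ^ (p - 1) * (f t * t - p * F t - γ) := by
        have h1 : t ^ p = t ^ (p - 1) * t := by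
          rw [← Real.rpow_add_one ht0.ne' (p - 1)]; ring_nf
        rw [h1]
        field_simp
        ring
      rw [hnum]
      have := hγ t htM
      have hpw : (0:ℝ) ≤ t ^ (p - 1) := (Real.rpow_pos_of_pos ht0 _).le
      nlinarith
  have hgu : g u ≤ g x := mono ⟨le_refl u, hux⟩ ⟨hux, le_refl x⟩ hux
  have hup : (0:ℝ) < u ^ p := Real.rpow_pos_of_pos hu0 p
  have hxp : (0:ℝ) < x ^ p := Real.rpow_pos_of_pos (lt_of_lt_of_le hu0 hux) p
  simp only [hg] at hgu
  rw [div_le_div_iff₀ hup hxp] at hgu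
  have h1 : F x / x ^ p - F u / u ^ p - γ / p * (1 / u ^ p - 1 / x ^ p)
      = ((F x + γ / p) * u ^ p - (F u + γ / p) * x ^ p) / (u ^ p * x ^ p) := by
    field_simp
    ring
  have h2 : (0:ℝ) ≤ ((F x + γ / p) * u ^ p - (F u + γ / p) * x ^ p) / (u ^ p * x ^ p) :=
    div_nonneg (by linarith) (by positivity)
  linarith [h1 ▸ h2]
end

section
/- Let p > 1 and λ ∈ ℝ. Suppose that limsup_{x→+∞} pF(x)/x^p ≤ λ and that f(x)·x − pF(x) → +∞ as x → +∞. Then (λ/p)·x^p − F(x) → +∞ as x → +∞. (This is the key real-analysis step, via (eq35)–(eq36) and Fatou's lemma, in the proof that the energy functional is coercive in Proposition 8.) -/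
open Filter Topology

set_option maxHeartbeats 1000000

/-- Key step in the proof of coercivity (Proposition 8): if
`limsup_{x→+∞} pF(x)/x^p ≤ λ` and `f(x)x − pF(x) → +∞` as `x → +∞`, then
`(λ/p)x^p − F(x) → +∞` as `x → +∞`. -/
theorem coercivity_key_step (f : ℝ → ℝ) (hf : Continuous f)
    (F : ℝ → ℝ) (hF : ∀ x : ℝ, F x = ∫ s in (0 : ℝ)..x, f s)
    (p lam : ℝ) (hp : 1 < p)
    (hlimsup : ∀ ε : ℝ, 0 < ε → ∀ᶠ x : ℝ in atTop, p * F x / x ^ p ≤ lam + ε)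
    (heta : Tendsto (fun x => f x * x - p * F x) atTop atTop) :
    Tendsto (fun x => lam / p * x ^ p - F x) atTop atTop := by
  have hp0 : (0:ℝ) < p := lt_trans one_pos hp
  have hFd : ∀ x : ℝ, HasDerivAt F (f x) x := by
    intro x
    have := (hf.integral_hasStrictDerivAt 0 x).hasDerivAt
    exact this.congr_of_eventuallyEq (Filter.Eventually.of_forall fun y => (hF y))
  have hFc : Continuous F := by
    have : Differentiable ℝ F := fun x => (hFd x).differentiableAt
    exact this.continuous
  -- derivative of g c t = (F t + c)/t^p
  have hgd : ∀ (c : ℝ) (t : ℝ), 0 < t →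
      HasDerivAt (fun t => (F t + c) / t ^ p)
        ((f t * t - p * F t - p * c) / t ^ (p + 1)) t := by
    intro c t ht
    have htp : (0:ℝ) < t ^ p := Real.rpow_pos_of_pos ht p
    have h1 : HasDerivAt (fun t : ℝ => F t + c) (f t) t := (hFd t).add_const c
    have h2 : HasDerivAt (fun t : ℝ => t ^ p) (p * t ^ (p - 1)) t :=
      Real.hasDerivAt_rpow_const (Or.inl (ne_of_gt ht))
    have h3 := h1.div h2 (ne_of_gt htp)
    refine HasDerivAt.congr_deriv h3 ?_
    have hA : (0:ℝ) < t ^ (p - 1) := Real.rpow_pos_of_pos ht _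
    have e1 : t ^ p = t * t ^ (p - 1) := by
      have h : t ^ p = t ^ (1 + (p - 1)) := by ring_nf
      rw [h, Real.rpow_add ht, Real.rpow_one]
    have e2 : t ^ (p + 1) = t ^ (2:ℕ) * t ^ (p - 1) := by
      have h : t ^ (p + 1) = t ^ ((2:ℝ) + (p - 1)) := by ring_nf
      rw [h, Real.rpow_add ht, show ((2:ℝ)) = ((2:ℕ):ℝ) by norm_num, Real.rpow_natCast]
    rw [e1, e2]
    field_simp
    ring
  rw [tendsto_atTop]
  intro C
  set M : ℝ := max 1 (p * (C + 1)) with hMdef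
  have hM1 : (1:ℝ) ≤ M := le_max_left _ _
  have hMC : p * (C + 1) ≤ M := le_max_right _ _
  obtain ⟨R₀, hR₀⟩ := eventually_atTop.mp (heta.eventually_ge_atTop M)
  set R : ℝ := max R₀ 1 with hRdef
  refine eventually_atTop.2 ⟨R, fun x hx => ?_⟩
  have hx1 : (1:ℝ) ≤ x := le_trans (le_max_right _ _) hx
  have hx0 : (0:ℝ) < x := lt_of_lt_of_le one_pos hx1
  have hxp : (0:ℝ) < x ^ p := Real.rpow_pos_of_pos hx0 p
  set c : ℝ := M / p with hcdef
  have hcp : c * p = M := div_mul_cancel₀ _ (ne_of_gt hp0)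
  have hc0 : (0:ℝ) < c := div_pos (lt_of_lt_of_le one_pos hM1) hp0
  have hCc : C + 1 ≤ c := by
    rw [hcdef, le_div_iff₀ hp0]; linarith [hMC]
  set ε : ℝ := p / (2 * x ^ p) with hεdef
  have hε0 : 0 < ε := by positivity
  have hεx : ε * x ^ p * 2 = p := by
    rw [hεdef]; field_simp
  obtain ⟨Y, hY⟩ := eventually_atTop.mp (hlimsup ε hε0)
  obtain ⟨y, ⟨hxy, hYy⟩, hy2⟩ :=
    (((eventually_ge_atTop x).and (eventually_ge_atTop Y)).and
      ((tendsto_rpow_atTop hp0).eventually_ge_atTop (2 * c * x ^ p))).exists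
  have hy0 : (0:ℝ) < y := lt_of_lt_of_le hx0 hxy
  have hyp : (0:ℝ) < y ^ p := Real.rpow_pos_of_pos hy0 p
  -- monotonicity of g t = (F t + c) / t ^ p on [x, y]
  have hmono : (F x + c) / x ^ p ≤ (F y + c) / y ^ p := by
    have hmain : MonotoneOn (fun t => (F t + c) / t ^ p) (Set.Icc x y) := by
      apply monotoneOn_of_deriv_nonneg (convex_Icc x y)
      · apply ContinuousOn.div
        · exact (hFc.add continuous_const).continuousOn
        · intro t ht
          exact (Real.continuousAt_rpow_const t p
            (Or.inl (ne_of_gt (lt_of_lt_of_le hx0 ht.1)))).continuousWithinAt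
        · intro t ht
          exact ne_of_gt (Real.rpow_pos_of_pos (lt_of_lt_of_le hx0 ht.1) p)
      · intro t ht
        rw [interior_Icc] at ht
        exact ((hgd c t (lt_trans hx0 ht.1)).differentiableAt).differentiableWithinAt
      · intro t ht
        rw [interior_Icc] at ht
        have ht0 : 0 < t := lt_trans hx0 ht.1
        rw [(hgd c t ht0).deriv]
        apply div_nonneg
        · have hηt : M ≤ f t * t - p * F t := by
            apply hR₀
            exact le_trans (le_trans (le_max_left _ _) hx) (le_of_lt ht.1)
          nlinarith [hcp]
        · exact le_of_lt (Real.rpow_pos_of_pos ht0 (p + 1))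
    exact hmain (Set.left_mem_Icc.2 hxy) (Set.right_mem_Icc.2 hxy) hxy
  have hA : (F x + c) * y ^ p ≤ (F y + c) * x ^ p :=
    (div_le_div_iff₀ hxp hyp).mp hmono
  have hB : p * F y ≤ (lam + ε) * y ^ p :=
    (div_le_iff₀ hyp).mp (hY y hYy)
  have hL : lam / p * p = lam := div_mul_cancel₀ _ (ne_of_gt hp0)
  have s1 : p * ((F x + c) * y ^ p) ≤ p * ((F y + c) * x ^ p) :=
    mul_le_mul_of_nonneg_left hA (le_of_lt hp0)
  have s2 : p * F y * x ^ p ≤ (lam + ε) * y ^ p * x ^ p :=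
    mul_le_mul_of_nonneg_right hB (le_of_lt hxp)
  have s3 : p * c * x ^ p ≤ p / 2 * y ^ p := by
    nlinarith [mul_le_mul_of_nonneg_left hy2 (le_of_lt (half_pos hp0))]
  have s4 : ε * y ^ p * x ^ p = p / 2 * y ^ p := by
    linear_combination (y ^ p / 2) * hεx
  have s5 : p * (F x + c) * y ^ p ≤ lam * y ^ p * x ^ p + p * y ^ p := by
    nlinarith [s1, s2, s3, s4, hcp]
  have hL' : lam * y ^ p * x ^ p = lam / p * x ^ p * (p * y ^ p) := by
    have hpne : p ≠ 0 := ne_of_gt hp0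
    field_simp
  have s6 : F x + c ≤ lam / p * x ^ p + 1 := by
    have hpy : (0:ℝ) < p * y ^ p := mul_pos hp0 hyp
    rw [← mul_le_mul_iff_right₀ hpy]
    linarith [s5, hL']
  linarith [s6, hCc]
end
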